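/- Let g : ℝ^d → ℝ be μ-strongly convex and differentiable with minimizer θ*, and consider the probability density ρ_β(θ) ∝ e^{-β g(θ)} on ℝ^d. Then ∫ |θ - θ*|² ρ_β(θ) dθ ≤ d/(βμ). -/

import Mathlib

open scoped RealInnerProductSpace
open MeasureTheory Set Filter Topology

/-- Bernoulli-type inequality: `1 - (s^d)⁻¹ ≤ d * (s - 1)` for `s ≥ 1`. -/
lemma aux_bern_stmt15 (d : ℕ) {s : ℝ} (hs : 1 ≤ s) : 1 - (s ^ d)⁻¹ ≤ d * (s - 1) := by
  have hs0 : (0:ℝ) < s := by linarith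
  have hinv : (0:ℝ) ≤ s⁻¹ := inv_nonneg.2 hs0.le
  have h1 : 1 + (d:ℝ) * (s⁻¹ - 1) ≤ (s⁻¹) ^ d := by
    have h := one_add_mul_le_pow (a := s⁻¹ - 1) (by linarith) d
    have he : (1:ℝ) + (s⁻¹ - 1) = s⁻¹ := by ring
    rwa [he] at h
  have h3 : s * s⁻¹ = 1 := mul_inv_cancel₀ hs0.ne'
  have h2 : -((s:ℝ) - 1) ≤ s⁻¹ - 1 := by nlinarith
  have h4 : (1:ℝ) - d * (s - 1) ≤ (s ^ d)⁻¹ := by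
    calc (1:ℝ) - d * (s - 1) = 1 + (d:ℝ) * (-(s - 1)) := by ring
      _ ≤ 1 + (d:ℝ) * (s⁻¹ - 1) := by
          have : (0:ℝ) ≤ (d:ℝ) := Nat.cast_nonneg d
          nlinarith
      _ ≤ (s⁻¹) ^ d := h1
      _ = (s ^ d)⁻¹ := inv_pow s d
  linarith

set_option maxHeartbeats 1000000 in
/-- Second-moment concentration of the Gibbs measure `ρ_β(θ) ∝ e^{-βg(θ)}` for a
`μ`-strongly convex potential `g` on `ℝ^d` with minimizer `θ*`:
`∫ |θ - θ*|² ρ_β(θ) dθ ≤ d/(βμ)`. -/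
theorem stmt15 {d : ℕ}
    (g : EuclideanSpace ℝ (Fin d) → ℝ)
    (gg : EuclideanSpace ℝ (Fin d) → EuclideanSpace ℝ (Fin d))
    (hgrad : ∀ θ, HasGradientAt g (gg θ) θ)
    (μ β : ℝ) (hμ : 0 < μ) (hβ : 0 < β)
    (hmono : ∀ a b, ⟪a - b, gg a - gg b⟫ ≥ μ * ‖a - b‖ ^ 2)
    (θstar : EuclideanSpace ℝ (Fin d)) (hcrit : gg θstar = 0)
    (hmin : ∀ θ, g θstar ≤ g θ)
    (hint1 : Integrable (fun θ => Real.exp (-β * g θ)))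
    (hint2 : Integrable (fun θ => ‖θ - θstar‖ ^ 2 * Real.exp (-β * g θ))) :
    (∫ θ, ‖θ - θstar‖ ^ 2 * Real.exp (-β * g θ)) / (∫ θ, Real.exp (-β * g θ))
      ≤ d / (β * μ) := by
  classical
  set Z := ∫ θ, Real.exp (-β * g θ) with hZdef
  set N := ∫ θ, ‖θ - θstar‖ ^ 2 * Real.exp (-β * g θ) with hNdef
  set A : EuclideanSpace ℝ (Fin d) → ℝ := fun θ => ⟪θ - θstar, gg θ⟫ with hAdef
  have hA : ∀ θ, μ * ‖θ - θstar‖ ^ 2 ≤ A θ := fun θ => by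
    have h := hmono θ θstar
    rw [hcrit, sub_zero] at h
    exact h
  have hA0 : ∀ θ, 0 ≤ A θ := fun θ => le_trans (by positivity) (hA θ)
  have hgcont : Continuous g :=
    continuous_iff_continuousAt.2 fun θ => (hgrad θ).hasFDerivAt.continuousAt
  have hggmeas : Measurable gg := by
    have h1 : Measurable (fderiv ℝ g) := measurable_fderiv ℝ g
    have h2 : gg = fun θ => (InnerProductSpace.toDual ℝ _).symm (fderiv ℝ g θ) := by
      funext θ
      rw [(hgrad θ).hasFDerivAt.fderiv]
      simp
    rw [h2]
    exact (LinearIsometryEquiv.continuous _).measurable.comp h1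
  have hAmeas : Measurable A := (measurable_id.sub measurable_const).inner hggmeas
  have hgmeas : Measurable fun θ => Real.exp (-β * g θ) :=
    (hgcont.measurable.const_mul (-β)).exp
  -- convexity along rays
  have hconv : ∀ (θ : EuclideanSpace ℝ (Fin d)) (s : ℝ), 1 < s →
      g θ + (s - 1) * A θ ≤ g (θstar + s • (θ - θstar)) := by
    intro θ s hs
    set v := θ - θstar with hv
    have hh : ∀ t : ℝ, HasDerivAt (fun t : ℝ => g (θstar + t • v)) ⟪gg (θstar + t • v), v⟫ t := by
      intro t
      have hline : HasDerivAt (fun t : ℝ => θstar + t • v) v t := by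
        simpa using ((hasDerivAt_id t).smul_const v).const_add θstar
      have h := (hgrad (θstar + t • v)).hasFDerivAt.comp_hasDerivAt t hline
      simpa only [Function.comp_def, InnerProductSpace.toDual_apply_apply] using h
    obtain ⟨c, hc, hceq⟩ := exists_hasDerivAt_eq_slope (fun t : ℝ => g (θstar + t • v))
      (fun t => ⟪gg (θstar + t • v), v⟫) hs
      ((continuous_iff_continuousAt.2 fun t => (hh t).differentiableAt.continuousAt).continuousOn)
      (fun t _ => hh t)
    have h1v : θstar + (1 : ℝ) • v = θ := by rw [one_smul, hv]; abel
    have hm : ⟪gg θ, v⟫ ≤ ⟪gg (θstar + c • v), v⟫ := by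
      have h2 := hmono (θstar + c • v) θ
      have hd : (θstar + c • v) - θ = (c - 1) • v := by rw [hv]; module
      rw [hd, real_inner_smul_left] at h2
      have hc1 : 0 < c - 1 := by linarith [hc.1]
      have h4 : 0 ≤ ⟪v, gg (θstar + c • v) - gg θ⟫ :=
        (mul_nonneg_iff_of_pos_left hc1).mp (le_trans (by positivity) h2)
      rw [inner_sub_right] at h4
      have e1 : ⟪gg θ, v⟫ = ⟪v, gg θ⟫ := real_inner_comm _ _
      have e2 : ⟪gg (θstar + c • v), v⟫ = ⟪v, gg (θstar + c • v)⟫ := real_inner_comm _ _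
      linarith
    simp only [h1v] at hceq
    have hs1 : 0 < s - 1 := by linarith
    rw [eq_div_iff hs1.ne'] at hceq
    have e3 : A θ = ⟪gg θ, v⟫ := by rw [hAdef, hv]; exact real_inner_comm _ _
    nlinarith [hm, hceq, e3]
  -- positivity of the partition function
  have hZpos : 0 < Z := by
    rw [hZdef, integral_pos_iff_support_of_nonneg_ae
      (Filter.Eventually.of_forall fun θ => (Real.exp_pos _).le) hint1]
    have hsupp : Function.support (fun θ : EuclideanSpace ℝ (Fin d) => Real.exp (-β * g θ))
        = Set.univ := Set.eq_univ_of_forall fun θ => Function.mem_support.2 (Real.exp_ne_zero _)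
    rw [hsupp]
    exact isOpen_univ.measure_pos volume ⟨0, trivial⟩
  -- the key estimate for each fixed s > 1
  have key : ∀ s : ℝ, 1 < s →
      (∫ θ, ‖θ - θstar‖ ^ 2 * Real.exp (-(β * (s - 1) * A θ)) * Real.exp (-β * g θ))
        ≤ ↑d * Z / (β * μ) := by
    intro s hs
    have hs1 : 0 < s - 1 := by linarith
    have hcpos : 0 < β * (s - 1) := by positivity
    set c := β * (s - 1) with hcdef
    -- pointwise inequality
    have p2 : ∀ θ, Real.exp (-β * g (θstar + s • (θ - θstar)))
        + c * (A θ * Real.exp (-(c * A θ))) * Real.exp (-β * g θ) ≤ Real.exp (-β * g θ) := by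
      intro θ
      have h1 : Real.exp (-β * g (θstar + s • (θ - θstar)))
          ≤ Real.exp (-β * g θ) * Real.exp (-(c * A θ)) := by
        rw [← Real.exp_add]
        apply Real.exp_le_exp.2
        have hcv := hconv θ s hs
        simp only [hcdef]
        nlinarith [mul_le_mul_of_nonneg_left hcv hβ.le]
      have h2 : Real.exp (-(c * A θ)) * (1 + c * A θ) ≤ 1 := by
        have hx := Real.add_one_le_exp (c * A θ)
        have hprod : Real.exp (-(c * A θ)) * Real.exp (c * A θ) = 1 := by
          rw [← Real.exp_add]; simp
        nlinarith [Real.exp_pos (-(c * A θ))]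
      nlinarith [h1, h2, Real.exp_pos (-β * g θ), Real.exp_pos (-(c * A θ))]
    -- measurability
    have hΦcont : Continuous fun θ : EuclideanSpace ℝ (Fin d) =>
        Real.exp (-β * g (θstar + s • (θ - θstar))) := by fun_prop
    have m1 : Measurable fun θ => Real.exp (-(c * A θ)) := ((hAmeas.const_mul c).neg).exp
    have hGmeas : Measurable fun θ =>
        c * (A θ * Real.exp (-(c * A θ))) * Real.exp (-β * g θ) :=
      ((hAmeas.mul m1).const_mul c).mul hgmeas
    have hFmeas : Measurable fun θ =>
        ‖θ - θstar‖ ^ 2 * Real.exp (-(c * A θ)) * Real.exp (-β * g θ) :=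
      (((measurable_id.sub measurable_const).norm.pow measurable_const).mul m1).mul hgmeas
    -- integrability
    have hΦint : Integrable (fun θ => Real.exp (-β * g (θstar + s • (θ - θstar)))) := by
      apply hint1.mono' hΦcont.aestronglyMeasurable
      filter_upwards with θ
      rw [Real.norm_eq_abs, abs_of_nonneg (Real.exp_pos _).le]
      have hge : g θ ≤ g (θstar + s • (θ - θstar)) := by
        nlinarith [hconv θ s hs, hA0 θ, hs1]
      exact Real.exp_le_exp.2 (by nlinarith [mul_le_mul_of_nonneg_left hge hβ.le])
    have hGint : Integrable (fun θ =>
        c * (A θ * Real.exp (-(c * A θ))) * Real.exp (-β * g θ)) := by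
      apply hint1.mono' hGmeas.aestronglyMeasurable
      filter_upwards with θ
      rw [Real.norm_eq_abs, abs_of_nonneg (mul_nonneg (mul_nonneg hcpos.le
        (mul_nonneg (hA0 θ) (Real.exp_pos _).le)) (Real.exp_pos _).le)]
      linarith [p2 θ, (Real.exp_pos (-β * g (θstar + s • (θ - θstar)))).le]
    have hFint : Integrable (fun θ =>
        ‖θ - θstar‖ ^ 2 * Real.exp (-(c * A θ)) * Real.exp (-β * g θ)) := by
      apply hint2.mono' hFmeas.aestronglyMeasurable
      filter_upwards with θ
      rw [Real.norm_eq_abs, abs_of_nonneg (by positivity)]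
      have he1 : Real.exp (-(c * A θ)) ≤ 1 :=
        Real.exp_le_one_iff.2 (neg_nonpos.2 (mul_nonneg hcpos.le (hA0 θ)))
      exact mul_le_mul_of_nonneg_right
        (mul_le_of_le_one_right (by positivity) he1) (Real.exp_pos _).le
    -- integral inequalities
    have i1 : (∫ θ, Real.exp (-β * g (θstar + s • (θ - θstar))))
        + (∫ θ, c * (A θ * Real.exp (-(c * A θ))) * Real.exp (-β * g θ)) ≤ Z := by
      rw [← integral_add hΦint hGint]
      exact integral_mono (hΦint.add hGint) hint1 p2
    have i2 : (∫ θ, Real.exp (-β * g (θstar + s • (θ - θstar)))) = (s ^ d)⁻¹ * Z := by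
      have h0 : ∀ θ : EuclideanSpace ℝ (Fin d),
          θstar + s • (θ - θstar) = s • θ + (θstar - s • θstar) := by
        intro θ; rw [smul_sub]; abel
      calc (∫ θ, Real.exp (-β * g (θstar + s • (θ - θstar))))
          = ∫ θ, (fun y => Real.exp (-β * g (y + (θstar - s • θstar)))) (s • θ) := by
            congr 1; funext θ; simp only []; rw [h0]
        _ = |(s ^ Module.finrank ℝ (EuclideanSpace ℝ (Fin d)))⁻¹| •
              ∫ y, Real.exp (-β * g (y + (θstar - s • θstar))) :=
            MeasureTheory.Measure.integral_comp_smul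
              (μ := (volume : Measure (EuclideanSpace ℝ (Fin d))))
              (fun y => Real.exp (-β * g (y + (θstar - s • θstar)))) s
        _ = (s ^ d)⁻¹ * Z := by
            rw [integral_add_right_eq_self (μ := volume)
              (fun y => Real.exp (-β * g y)) (θstar - s • θstar)]
            rw [finrank_euclideanSpace_fin, smul_eq_mul,
              abs_of_nonneg (by positivity), hZdef]
    have i3 : β * μ * (s - 1) *
        (∫ θ, ‖θ - θstar‖ ^ 2 * Real.exp (-(c * A θ)) * Real.exp (-β * g θ))
        ≤ ∫ θ, c * (A θ * Real.exp (-(c * A θ))) * Real.exp (-β * g θ) := by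
      rw [← integral_const_mul]
      apply integral_mono (hFint.const_mul _) hGint
      intro θ
      have h := hA θ
      have he := (Real.exp_pos (-(c * A θ))).le
      have hg := (Real.exp_pos (-β * g θ)).le
      simp only []
      rw [hcdef]
      nlinarith [mul_le_mul_of_nonneg_right h (mul_nonneg he hg)]
    have bern : 1 - ((s:ℝ) ^ d)⁻¹ ≤ d * (s - 1) := aux_bern_stmt15 d hs.le
    set Is := ∫ θ, ‖θ - θstar‖ ^ 2 * Real.exp (-(c * A θ)) * Real.exp (-β * g θ) with hIsdef
    have hIs1 : β * μ * (s - 1) * Is ≤ (1 - (s ^ d)⁻¹) * Z := by nlinarith [i1, i2, i3]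
    have hIs2 : β * μ * (s - 1) * Is ≤ (↑d * (s - 1)) * Z := by
      refine le_trans hIs1 ?_
      have := mul_le_mul_of_nonneg_right bern hZpos.le
      nlinarith [this]
    rw [le_div_iff₀ (by positivity : (0:ℝ) < β * μ)]
    nlinarith [hIs2, hs1]
  -- pass to the limit s → 1⁺ by dominated convergence
  have hN : N ≤ ↑d * Z / (β * μ) := by
    have hlim : Tendsto (fun n : ℕ =>
        ∫ θ, ‖θ - θstar‖ ^ 2 * Real.exp (-(β * ((1 + ((n:ℝ) + 1)⁻¹) - 1) * A θ))
          * Real.exp (-β * g θ)) atTop (𝓝 N) := by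
      rw [hNdef]
      apply MeasureTheory.tendsto_integral_of_dominated_convergence
        (bound := fun θ => ‖θ - θstar‖ ^ 2 * Real.exp (-β * g θ))
      · intro n
        exact ((((measurable_id.sub measurable_const).norm.pow measurable_const).mul
          ((hAmeas.const_mul _).neg.exp)).mul hgmeas).aestronglyMeasurable
      · exact hint2
      · intro n
        filter_upwards with θ
        rw [Real.norm_eq_abs, abs_of_nonneg (by positivity)]
        have hpos : (0:ℝ) ≤ β * ((1 + ((n:ℝ) + 1)⁻¹) - 1) := by
          have : (0:ℝ) ≤ ((n:ℝ) + 1)⁻¹ := by positivity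
          nlinarith
        have he1 : Real.exp (-(β * ((1 + ((n:ℝ) + 1)⁻¹) - 1) * A θ)) ≤ 1 :=
          Real.exp_le_one_iff.2 (neg_nonpos.2 (mul_nonneg hpos (hA0 θ)))
        exact mul_le_mul_of_nonneg_right
          (mul_le_of_le_one_right (by positivity) he1) (Real.exp_pos _).le
      · filter_upwards with θ
        have h1 : Tendsto (fun n : ℕ => (1 + ((n:ℝ) + 1)⁻¹) - 1) atTop (𝓝 0) := by
          have := tendsto_one_div_add_atTop_nhds_zero_nat (𝕜 := ℝ)
          simp only [one_div] at this
          simpa using this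
        have h2 : Tendsto (fun n : ℕ => -(β * ((1 + ((n:ℝ) + 1)⁻¹) - 1) * A θ))
            atTop (𝓝 0) := by
          have h3 := (h1.const_mul β).mul_const (A θ)
          simpa using h3.neg
        have h4 : Tendsto (fun n : ℕ =>
            Real.exp (-(β * ((1 + ((n:ℝ) + 1)⁻¹) - 1) * A θ))) atTop (𝓝 1) := by
          have := (Real.continuous_exp.continuousAt (x := (0:ℝ))).tendsto.comp h2
          simpa [Function.comp_def] using this
        have h5 := (h4.const_mul (‖θ - θstar‖ ^ 2)).mul_const (Real.exp (-β * g θ))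
        simpa [mul_one] using h5
    apply le_of_tendsto hlim
    filter_upwards with n
    have hsn : (1:ℝ) < 1 + ((n:ℝ) + 1)⁻¹ := by
      have : (0:ℝ) < ((n:ℝ) + 1)⁻¹ := by positivity
      linarith
    have h := key (1 + ((n:ℝ) + 1)⁻¹) hsn
    simpa using h
  rw [div_le_div_iff₀ hZpos (by positivity : (0:ℝ) < β * μ)]
  exact (le_div_iff₀ (by positivity : (0:ℝ) < β * μ)).1 hN
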